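/- Let E be a complex Hilbert space, k a nonzero real number, and B a positive self-adjoint bounded operator on E. Then S := (k²/2)·(Id_E + (Id_E + (4/k⁴)·B)^{1/2}), where the square root is taken via the continuous functional calculus for positive operators, is the unique invertible positive self-adjoint bounded operator on E satisfying the quadratic operator equation S² − k²·S − B = 0. -/

import Mathlib

/- STATEMENT 2: for `B` positive self-adjoint bounded and `k ≠ 0`,
`S := (k²/2)·(Id + (Id + (4/k⁴)·B)^{1/2})` is the unique invertible positive
self-adjoint bounded operator with `S² − k²·S − B = 0`.  Square roots are taken
via the continuous functional calculus (`cfc Real.sqrt`). -/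

noncomputable section
open ContinuousLinearMap

set_option maxHeartbeats 2000000 in
set_option synthInstance.maxHeartbeats 400000 in
theorem statement2
    (E : Type) [NormedAddCommGroup E] [InnerProductSpace ℂ E] [CompleteSpace E]
    (k : ℝ) (hk : k ≠ 0)
    (B : E →L[ℂ] E) (hBpos : B.IsPositive) (hBsa : IsSelfAdjoint B)
    (S : E →L[ℂ] E)
    (hS : S = ((k : ℂ) ^ 2 / 2) •
      ((1 : E →L[ℂ] E) + cfc Real.sqrt ((1 : E →L[ℂ] E) + ((4 : ℂ) / (k : ℂ) ^ 4) • B))) :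
    (S.IsPositive ∧ IsSelfAdjoint S ∧ IsUnit S ∧
      S ^ 2 - (k : ℂ) ^ 2 • S - B = 0) ∧
    (∀ S' : E →L[ℂ] E, S'.IsPositive → IsSelfAdjoint S' → IsUnit S' →
      S' ^ 2 - (k : ℂ) ^ 2 • S' - B = 0 → S' = S) := by
  have hkC : (k : ℂ) ≠ 0 := Complex.ofReal_ne_zero.mpr hk
  -- smul of a nonneg real scalar preserves nonnegativity
  have hsmul : ∀ (r : ℝ) (x : E →L[ℂ] E), 0 ≤ r → 0 ≤ x → 0 ≤ ((r : ℂ)) • x := by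
    intro r x hr hx
    have h := star_left_conjugate_nonneg hx (((Real.sqrt r : ℝ) : ℂ) • (1 : E →L[ℂ] E))
    rwa [star_smul, star_one, Complex.star_def, Complex.conj_ofReal, smul_mul_assoc, one_mul,
      mul_smul_comm, mul_one, smul_smul, ← Complex.ofReal_mul, Real.mul_self_sqrt hr] at h
  have hB0 : (0 : E →L[ℂ] E) ≤ B := (nonneg_iff_isPositive B).mpr hBpos
  set A : E →L[ℂ] E := (1 : E →L[ℂ] E) + ((4 : ℂ) / (k : ℂ) ^ 4) • B with hA
  have hc4 : ((4 : ℂ) / (k : ℂ) ^ 4) = ((4 / k ^ 4 : ℝ) : ℂ) := by push_cast; ring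
  have hP : (0 : E →L[ℂ] E) ≤ ((4 : ℂ) / (k : ℂ) ^ 4) • B := by
    rw [hc4]; exact hsmul _ _ (by positivity) hB0
  have hA0 : (0 : E →L[ℂ] E) ≤ A :=
    le_trans zero_le_one (le_add_of_nonneg_right hP)
  have hAsa : IsSelfAdjoint A := IsSelfAdjoint.of_nonneg hA0
  set T : E →L[ℂ] E := cfc Real.sqrt A with hT
  have hT0 : (0 : E →L[ℂ] E) ≤ T := cfc_nonneg fun x _ => Real.sqrt_nonneg x
  have hTsa : IsSelfAdjoint T := IsSelfAdjoint.of_nonneg hT0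
  have hTT : T * T = A := by
    rw [hT, ← cfc_mul Real.sqrt Real.sqrt A]
    have hcg : (spectrum ℝ A).EqOn (fun x => Real.sqrt x * Real.sqrt x) id := fun x hx =>
      Real.mul_self_sqrt (spectrum_nonneg_of_nonneg hA0 hx)
    rw [cfc_congr hcg, cfc_id ℝ A]
  -- nonnegativity of S
  have hd : ((k : ℂ) ^ 2 / 2) = ((k ^ 2 / 2 : ℝ) : ℂ) := by push_cast; ring
  have hS0 : (0 : E →L[ℂ] E) ≤ S := by
    rw [hS, hd]
    exact hsmul _ _ (by positivity) (add_nonneg zero_le_one hT0)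
  have hSpos : S.IsPositive := (nonneg_iff_isPositive S).mp hS0
  -- invertibility of S
  have hSunit : IsUnit S := by
    have h1 : ((k : ℂ) ^ 2 / 2) • (1 : E →L[ℂ] E) ≤ S := by
      rw [← sub_nonneg, hS, smul_add, add_sub_cancel_left, hd]
      exact hsmul _ _ (by positivity) hT0
    have h2 : (0 : E →L[ℂ] E) ≤ ((k : ℂ) ^ 2 / 2) • (1 : E →L[ℂ] E) := by
      rw [hd]; exact hsmul _ _ (by positivity) zero_le_one
    have h3 : IsUnit (((k : ℂ) ^ 2 / 2) • (1 : E →L[ℂ] E)) := by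
      rw [Algebra.smul_def, mul_one]
      exact (isUnit_iff_ne_zero.mpr (div_ne_zero (pow_ne_zero 2 hkC) two_ne_zero)).map
        (algebraMap ℂ (E →L[ℂ] E))
    exact CStarAlgebra.isUnit_of_le _ h1 (h3.isStrictlyPositive h2)
  -- the quadratic equation
  have hmul : ((1 : E →L[ℂ] E) + T) * (1 + T) = 1 + T + T + A := by
    rw [← hTT]; noncomm_ring
  have hEq : S ^ 2 - (k : ℂ) ^ 2 • S - B = 0 := by
    rw [hS, sq, smul_mul_smul_comm, hmul, hA]
    match_scalars <;> (field_simp; try ring)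
  refine ⟨⟨hSpos, hSpos.isSelfAdjoint, hSunit, hEq⟩, ?_⟩
  -- uniqueness
  intro S' hpos' hsa' hunit' heq'
  have hS'0 : (0 : E →L[ℂ] E) ≤ S' := (nonneg_iff_isPositive S').mpr hpos'
  have hB2 : B = S' ^ 2 - (k : ℂ) ^ 2 • S' := (sub_eq_zero.mp heq').symm
  have hcoesmul : ((k ^ 2 : ℝ) : ℂ) • S' = (k : ℂ) ^ 2 • S' := by
    norm_cast
  have hcfcB : cfc (fun x : ℝ => x ^ 2 - k ^ 2 * x) S' = B := by
    rw [cfc_sub (fun x : ℝ => x ^ 2) (fun x : ℝ => k ^ 2 * x) S',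
      cfc_pow_id S' 2, cfc_const_mul_id (k ^ 2) S', hB2]
    rw [← hcoesmul, Complex.coe_smul]
  have hspec : ∀ x ∈ spectrum ℝ S', k ^ 2 ≤ x := by
    intro x hx
    have hx0 : 0 ≤ x := spectrum_nonneg_of_nonneg hS'0 hx
    have hxne : x ≠ 0 := by
      rintro rfl
      exact (spectrum.zero_mem_iff (R := ℝ)).mp hx hunit'
    have hmem : x ^ 2 - k ^ 2 * x ∈ spectrum ℝ B := by
      rw [← hcfcB, cfc_map_spectrum (fun x : ℝ => x ^ 2 - k ^ 2 * x) S']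
      exact ⟨x, hx, rfl⟩
    have hge : 0 ≤ x ^ 2 - k ^ 2 * x := spectrum_nonneg_of_nonneg hB0 hmem
    nlinarith [lt_of_le_of_ne hx0 (Ne.symm hxne)]
  have hk1le : ((k ^ 2 : ℝ) : ℂ) • (1 : E →L[ℂ] E) ≤ S' := by
    have := calc algebraMap ℝ (E →L[ℂ] E) (k ^ 2) = cfc (fun _ : ℝ => k ^ 2) S' :=
          (cfc_const (k ^ 2) S').symm
      _ ≤ cfc (id : ℝ → ℝ) S' := cfc_mono hspec
      _ = S' := cfc_id ℝ S'
    rwa [Algebra.algebraMap_eq_smul_one, ← Complex.coe_smul] at this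
  set T' : E →L[ℂ] E := ((2 : ℂ) / (k : ℂ) ^ 2) • S' - 1 with hT'
  have hT'0 : (0 : E →L[ℂ] E) ≤ T' := by
    have h5 : (0 : E →L[ℂ] E) ≤ S' - ((k ^ 2 / 2 : ℝ) : ℂ) • 1 := by
      have h6 : S' - ((k ^ 2 / 2 : ℝ) : ℂ) • (1 : E →L[ℂ] E)
          = (S' - ((k ^ 2 : ℝ) : ℂ) • 1) + ((k ^ 2 / 2 : ℝ) : ℂ) • 1 := by
        match_scalars <;> (push_cast; try ring)
      rw [h6]
      exact add_nonneg (sub_nonneg.mpr hk1le) (hsmul _ _ (by positivity) zero_le_one)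
    have h7 : T' = ((2 / k ^ 2 : ℝ) : ℂ) • (S' - ((k ^ 2 / 2 : ℝ) : ℂ) • 1) := by
      rw [hT']; match_scalars <;> (push_cast; field_simp; try ring)
    rw [h7]
    exact hsmul _ _ (by positivity) h5
  have hT'sq : T' * T' = A := by
    have expand : ∀ u : E →L[ℂ] E, (u - 1) * (u - 1) = u * u - u - u + 1 := fun u => by
      noncomm_ring
    rw [hT', expand, smul_mul_smul_comm, hA, hB2, pow_two S']
    match_scalars <;> (field_simp; try ring)
  have hfinal : T' = T := by
    have e1 : CFC.sqrt A = T' := CFC.sqrt_unique hT'sq hT'0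
    have e2 : CFC.sqrt A = T := CFC.sqrt_unique hTT hT0
    rw [← e1, e2]
  have h8 : S' = ((k : ℂ) ^ 2 / 2) • (1 + T') := by
    rw [hT']; match_scalars <;> (field_simp; try ring)
  rw [h8, hfinal]; exact hS.symm
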